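/- arXiv:2406.19532 — 2 statements merged into one kernel-verified Lean document; each statement's English description precedes it below -/
import Mathlib

section
/- Let G=(V,E) be a finite simple graph, S a maximum independent set of G of size k, and x^S ∈ {0,1}^n the indicator vector of S. Define f(x) = -∑_v x_v + (γ/2) xᵀ A_G x - (1/2) xᵀ A_{G'} x on [0,1]^n. If γ ≥ k+1, then x^S is a local minimizer of f over [0,1]^n. -/
/-! Write `x = s + d` with `s` the indicator of `S`. Then
`f x - f s = ∇f(s) ⬝ d + dᵀ Q d` with `Q = (γ/2) A_G - (1/2) A_{Gᶜ}`, and on the box `d ≤ 0` on `S`,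
`d ≥ 0` off `S`. Independence gives `∇f(s)_v = -|S| ≤ -1` on `S`; maximality gives each `v ∉ S`
a neighbour in `S`, so `∇f(s)_v ≥ γ - |S| ≥ 1` there. Hence the linear term is at least `‖d‖₁`,
while `|dᵀ Q d| ≤ (γ/2) ‖d‖₁²` because `|Q u v| ≤ γ/2`; so `f s ≤ f x` once `γ ‖d‖₁ < 2`. -/

open scoped Classical
open Finset Matrix

/-- The dataless quadratic network objective
`f(x) = -∑_v x_v + (γ/2) xᵀ A_G x - (1/2) xᵀ A_{Gᶜ} x`. -/
noncomputable def quantNetObj {n : ℕ} (G : SimpleGraph (Fin n)) (γ : ℝ) (x : Fin n → ℝ) : ℝ :=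
  -(∑ v, x v) + γ / 2 * (x ⬝ᵥ ((G.adjMatrix ℝ) *ᵥ x)) - 1 / 2 * (x ⬝ᵥ ((Gᶜ.adjMatrix ℝ) *ᵥ x))

open scoped Topology

namespace Matrix

variable {ι R : Type*} [Fintype ι]

theorem add_dotProduct_mulVec_add_of_isSymm [CommRing R] {M : Matrix ι ι R} (hM : M.IsSymm)
    (s d : ι → R) :
    (s + d) ⬝ᵥ (M *ᵥ (s + d)) = s ⬝ᵥ (M *ᵥ s) + 2 * ((M *ᵥ s) ⬝ᵥ d) + d ⬝ᵥ (M *ᵥ d) := by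
  have hsd : s ⬝ᵥ (M *ᵥ d) = (M *ᵥ s) ⬝ᵥ d := by
    rw [dotProduct_mulVec, ← vecMul_transpose, hM.eq]
  simp only [add_dotProduct, mulVec_add, dotProduct_add, hsd, dotProduct_comm d (M *ᵥ s)]
  ring

theorem abs_dotProduct_mulVec_le {M : Matrix ι ι ℝ} {c : ℝ} (hM : ∀ i j, |M i j| ≤ c)
    (x : ι → ℝ) : |x ⬝ᵥ (M *ᵥ x)| ≤ c * (∑ i, |x i|) ^ 2 := by
  calc |x ⬝ᵥ (M *ᵥ x)| = |∑ i, ∑ j, x i * M i j * x j| := by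
        simp only [dotProduct, mulVec, mul_sum, mul_assoc]
    _ ≤ ∑ i, ∑ j, |x i * M i j * x j| :=
        (abs_sum_le_sum_abs _ _).trans (sum_le_sum fun i _ => abs_sum_le_sum_abs _ _)
    _ ≤ ∑ i, ∑ j, |x i| * c * |x j| := by
        gcongr with i _ j _
        rw [abs_mul, abs_mul]
        gcongr
        exact hM i j
    _ = c * (∑ i, |x i|) ^ 2 := by
        rw [sq, sum_mul_sum, mul_sum]
        simp only [mul_sum]
        exact sum_congr rfl fun i _ => sum_congr rfl fun j _ => by ring

end Matrix

namespace SimpleGraph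

variable {V : Type*} (G : SimpleGraph V)

theorem adjMatrix_mulVec_indicator_apply [Fintype V] [DecidableEq V] [DecidableRel G.Adj]
    (S : Finset V) (v : V) :
    (G.adjMatrix ℝ *ᵥ fun u => if u ∈ S then 1 else 0) v = #{u ∈ S | G.Adj v u} := by
  simp [neighborFinset_eq_filter, inter_comm, inter_filter]

theorem compl_adjMatrix_mulVec [Fintype V] [DecidableEq V] [DecidableRel G.Adj] (x : V → ℝ) :
    Gᶜ.adjMatrix ℝ *ᵥ x = fun v => ∑ u, x u - x v - (G.adjMatrix ℝ *ᵥ x) v := by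
  have h : Gᶜ.adjMatrix ℝ = of 1 - 1 - G.adjMatrix ℝ := by
    rw [← adjMatrix_completeGraph_eq_of_one_sub_one, ←
      IsCompl.adjMatrix_add_adjMatrix_eq_adjMatrix_completeGraph (G := G) ℝ isCompl_compl,
      add_sub_cancel_left]
  ext v
  rw [h, sub_mulVec, sub_mulVec]
  simp [mulVec, dotProduct]

variable {G} {S : Finset V}

theorem exists_mem_adj_of_not_mem (hindep : ∀ u ∈ S, ∀ v ∈ S, ¬ G.Adj u v)
    (hmax : ∀ T : Finset V, (∀ u ∈ T, ∀ v ∈ T, ¬ G.Adj u v) → T.card ≤ S.card) {v : V}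
    (hv : v ∉ S) :
    ∃ u ∈ S, G.Adj v u := by
  by_contra! hnadj
  have hT : ∀ a ∈ insert v S, ∀ b ∈ insert v S, ¬ G.Adj a b := by
    simp only [mem_insert]
    rintro a (rfl | ha) b (rfl | hb)
    exacts [G.loopless.irrefl _, hnadj _ hb, fun h => hnadj _ ha h.symm, hindep a ha b hb]
  have := hmax _ hT
  rw [card_insert_of_notMem hv] at this
  omega

end SimpleGraph

section QuantNet

variable {n : ℕ} (G : SimpleGraph (Fin n)) (γ : ℝ)

noncomputable def quantNetMatrix : Matrix (Fin n) (Fin n) ℝ :=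
  (γ / 2) • G.adjMatrix ℝ - (1 / 2 : ℝ) • Gᶜ.adjMatrix ℝ

theorem isSymm_quantNetMatrix : (quantNetMatrix G γ).IsSymm :=
  ((G.isSymm_adjMatrix (α := ℝ)).smul _).sub ((Gᶜ.isSymm_adjMatrix (α := ℝ)).smul _)

theorem abs_quantNetMatrix_apply_le {γ : ℝ} (hγ : 1 ≤ γ) (u v : Fin n) :
    |quantNetMatrix G γ u v| ≤ γ / 2 := by
  by_cases h : G.Adj u v
  · have : ¬ Gᶜ.Adj u v := fun hc => (G.compl_adj u v).1 hc |>.2 h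
    simp [quantNetMatrix, h, this, abs_le]
    linarith
  · by_cases hc : Gᶜ.Adj u v
    all_goals simp [quantNetMatrix, h, hc]; linarith

theorem quantNetObj_eq (x : Fin n → ℝ) :
    quantNetObj G γ x = -(∑ v, x v) + x ⬝ᵥ (quantNetMatrix G γ *ᵥ x) := by
  simp only [quantNetObj, quantNetMatrix, sub_mulVec, smul_mulVec, dotProduct_sub,
    dotProduct_smul, smul_eq_mul]
  ring

noncomputable def quantNetGrad (s : Fin n → ℝ) (v : Fin n) : ℝ :=
  2 * (quantNetMatrix G γ *ᵥ s) v - 1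

theorem quantNetObj_add (s d : Fin n → ℝ) :
    quantNetObj G γ (s + d)
      = quantNetObj G γ s + quantNetGrad G γ s ⬝ᵥ d + d ⬝ᵥ (quantNetMatrix G γ *ᵥ d) := by
  rw [quantNetObj_eq, quantNetObj_eq,
    add_dotProduct_mulVec_add_of_isSymm (isSymm_quantNetMatrix G γ)]
  simp only [quantNetGrad, dotProduct, Pi.add_apply, sum_add_distrib, sub_mul, sum_sub_distrib,
    one_mul, mul_assoc, ← mul_sum, mul_comm (d _)]
  ring

theorem two_mul_quantNetMatrix_mulVec_indicator_apply (S : Finset (Fin n)) (v : Fin n) :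
    2 * (quantNetMatrix G γ *ᵥ fun u => if u ∈ S then 1 else 0) v
      = (γ + 1) * #{u ∈ S | G.Adj v u} - #S + if v ∈ S then 1 else 0 := by
  simp only [quantNetMatrix, sub_mulVec, smul_mulVec, SimpleGraph.compl_adjMatrix_mulVec,
    SimpleGraph.adjMatrix_mulVec_indicator_apply, Pi.sub_apply, Pi.smul_apply, smul_eq_mul,
    sum_boole, filter_univ_mem]
  ring

variable {G γ} {S : Finset (Fin n)}

theorem abs_sub_le_quantNetGrad_mul (hindep : ∀ u ∈ S, ∀ v ∈ S, ¬ G.Adj u v)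
    (hmax : ∀ T : Finset (Fin n), (∀ u ∈ T, ∀ v ∈ T, ¬ G.Adj u v) → T.card ≤ S.card)
    (hγ : (S.card : ℝ) + 1 ≤ γ) {x : Fin n → ℝ} (hx : x ∈ Set.Icc 0 1) (v : Fin n) :
    let s : Fin n → ℝ := fun u => if u ∈ S then 1 else 0
    |x v - s v| ≤ quantNetGrad G γ s v * (x v - s v) := by
  intro s
  rw [quantNetGrad, two_mul_quantNetMatrix_mulVec_indicator_apply]
  by_cases hv : v ∈ S
  · have hnbr : #{u ∈ S | G.Adj v u} = 0 :=
      card_eq_zero.2 (filter_eq_empty_iff.2 fun u hu => hindep v hv u hu)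
    have hS : (1 : ℝ) ≤ #S := by exact_mod_cast card_pos.2 ⟨v, hv⟩
    have hsv : s v = 1 := if_pos hv
    have hxv : x v ≤ 1 := hx.2 v
    rw [hsv, if_pos hv, hnbr, Nat.cast_zero, abs_of_nonpos (by linarith)]
    nlinarith [mul_nonneg (sub_nonneg.2 hS) (sub_nonneg.2 hxv)]
  · obtain ⟨u, hu, hvu⟩ := SimpleGraph.exists_mem_adj_of_not_mem hindep hmax hv
    have hnbr : (1 : ℝ) ≤ #{u ∈ S | G.Adj v u} := by
      exact_mod_cast card_pos.2 ⟨u, mem_filter.2 ⟨hu, hvu⟩⟩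
    have hsv : s v = 0 := if_neg hv
    have hxv : 0 ≤ x v := hx.1 v
    have hgrad : 1 ≤ (γ + 1) * #{u ∈ S | G.Adj v u} - #S - 1 := by nlinarith
    rw [hsv, if_neg hv, add_zero, sub_zero, abs_of_nonneg hxv]
    nlinarith

end QuantNet

/-- if S is a maximum independent set of size k and γ ≥ k+1, then the
indicator vector of S is a local minimizer of f over the box [0,1]^n. -/
theorem stmt1 {n k : ℕ} (G : SimpleGraph (Fin n)) (S : Finset (Fin n))
    (hindep : ∀ u ∈ S, ∀ v ∈ S, ¬ G.Adj u v)
    (hcard : S.card = k)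
    (hmax : ∀ T : Finset (Fin n), (∀ u ∈ T, ∀ v ∈ T, ¬ G.Adj u v) → T.card ≤ k)
    (γ : ℝ) (hγ : (k : ℝ) + 1 ≤ γ) :
    IsLocalMinOn (quantNetObj G γ) (Set.Icc (0 : Fin n → ℝ) 1)
      (fun v => if v ∈ S then (1 : ℝ) else 0) := by
  subst hcard
  set s : Fin n → ℝ := fun v => if v ∈ S then 1 else 0
  have hγ1 : 1 ≤ γ := by linarith [(#S).cast_nonneg (α := ℝ)]
  have hnear : ∀ᶠ x in 𝓝 s, γ * ∑ v, |x v - s v| < 2 := by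
    have hcont : Continuous fun x : Fin n → ℝ => γ * ∑ v, |x v - s v| := by fun_prop
    exact (hcont.tendsto s).eventually (gt_mem_nhds (by simp))
  filter_upwards [self_mem_nhdsWithin, nhdsWithin_le_nhds hnear] with x hx hxs
  set t := ∑ v, |x v - s v|
  have hgrad : t ≤ quantNetGrad G γ s ⬝ᵥ (x - s) :=
    sum_le_sum fun v _ => abs_sub_le_quantNetGrad_mul hindep hmax hγ hx v
  have hquad : |(x - s) ⬝ᵥ (quantNetMatrix G γ *ᵥ (x - s))| ≤ γ / 2 * t ^ 2 :=
    abs_dotProduct_mulVec_le (abs_quantNetMatrix_apply_le G hγ1) (x - s)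
  have hexp := quantNetObj_add G γ s (x - s)
  rw [add_sub_cancel] at hexp
  have ht : 0 ≤ t := sum_nonneg fun v _ => abs_nonneg _
  nlinarith [abs_le.1 hquad, mul_nonneg ht (by linarith : (0 : ℝ) ≤ 2 - γ * t)]
end

section
/- Let G=(V,E) be a finite simple graph with degree function d(v). Then the independence number α(G) satisfies α(G) ≥ ∑_{v∈V} 1/(1 + d(v)) (the Caro–Wei bound). -/
open scoped Classical
open Finset Matrix

/-- The independence number of `G`: the maximum cardinality of an independent set. -/
noncomputable def indepNum {n : ℕ} (G : SimpleGraph (Fin n)) : ℕ :=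
  (Finset.univ.powerset.filter (fun S : Finset (Fin n) => ∀ u ∈ S, ∀ v ∈ S, ¬ G.Adj u v)).sup
    Finset.card

/-! Greedy argument: pick a vertex `v` of minimum degree in the current vertex set `s`, put it
into the independent set and delete it together with its neighbours. Each of the at most
`1 + d(v)` deleted vertices has degree at least `d(v)`, so they carry total weight at most `1`,
and deleting vertices only lowers the degrees of the survivors, i.e. raises their weights. -/

namespace SimpleGraph

variable {V : Type*} (G : SimpleGraph V)

noncomputable def caroWeiSum (s : Finset V) : ℝ :=
  ∑ u ∈ s, 1 / (1 + #{w ∈ s | G.Adj u w})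

variable {G}

lemma sum_closedNbhd_inv_le_one {s : Finset V} {v : V}
    (hmin : ∀ u ∈ s, #{w ∈ s | G.Adj v w} ≤ #{w ∈ s | G.Adj u w}) :
    ∑ u ∈ insert v {w ∈ s | G.Adj v w}, (1 : ℝ) / (1 + #{w ∈ s | G.Adj u w}) ≤ 1 := by
  set d := #{w ∈ s | G.Adj v w}
  have hterm : ∀ u ∈ insert v {w ∈ s | G.Adj v w},
      (1 : ℝ) / (1 + #{w ∈ s | G.Adj u w}) ≤ 1 / (1 + (d : ℝ)) := by
    intro u hu
    rcases mem_insert.1 hu with rfl | hu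
    · rfl
    · gcongr
      exact_mod_cast hmin u (mem_filter.1 hu).1
  calc ∑ u ∈ insert v {w ∈ s | G.Adj v w}, (1 : ℝ) / (1 + #{w ∈ s | G.Adj u w})
      ≤ #(insert v {w ∈ s | G.Adj v w}) * (1 / (1 + (d : ℝ))) := by
        simpa using sum_le_sum hterm
    _ ≤ (1 + d) * (1 / (1 + (d : ℝ))) := by
        gcongr
        exact_mod_cast (card_insert_le _ _).trans_eq (add_comm _ _)
    _ = 1 := by field_simp

lemma sum_inv_le_caroWeiSum_of_subset {s t : Finset V} (hts : t ⊆ s) :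
    ∑ u ∈ t, (1 : ℝ) / (1 + #{w ∈ s | G.Adj u w}) ≤ G.caroWeiSum t := by
  unfold caroWeiSum
  gcongr

theorem exists_isIndepSet_subset_caroWeiSum_le (s : Finset V) :
    ∃ t ⊆ s, G.IsIndepSet t ∧ G.caroWeiSum s ≤ #t := by
  induction s using Finset.strongInduction with
  | H s ih =>
  rcases s.eq_empty_or_nonempty with rfl | hne
  · exact ⟨∅, subset_rfl, by simp, by simp [caroWeiSum]⟩
  obtain ⟨v, hv, hmin⟩ := s.exists_min_image (fun u => #{w ∈ s | G.Adj u w}) hne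
  set N := insert v {w ∈ s | G.Adj v w}
  have hNs : N ⊆ s := insert_subset hv (filter_subset _ _)
  obtain ⟨t, hts, ht, hsum⟩ := ih (s \ N) (sdiff_ssubset hNs (insert_nonempty _ _))
  have hvt : v ∉ t := fun h => (mem_sdiff.1 (hts h)).2 (mem_insert_self _ _)
  have hnadj : ∀ u ∈ t, ¬ G.Adj v u := fun u hu hvu =>
    (mem_sdiff.1 (hts hu)).2 (mem_insert_of_mem (mem_filter.2 ⟨(mem_sdiff.1 (hts hu)).1, hvu⟩))
  refine ⟨insert v t, insert_subset hv (hts.trans sdiff_subset), ?_, ?_⟩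
  · rw [coe_insert]
    exact ht.insert fun u hu _ => ⟨hnadj u hu, fun h => hnadj u hu h.symm⟩
  · calc G.caroWeiSum s
        = ∑ u ∈ s \ N, (1 : ℝ) / (1 + #{w ∈ s | G.Adj u w})
          + ∑ u ∈ N, (1 : ℝ) / (1 + #{w ∈ s | G.Adj u w}) := (sum_sdiff hNs).symm
      _ ≤ G.caroWeiSum (s \ N) + 1 :=
          add_le_add (sum_inv_le_caroWeiSum_of_subset sdiff_subset)
            (sum_closedNbhd_inv_le_one hmin)
      _ ≤ #t + 1 := by gcongr
      _ = #(insert v t) := by rw [card_insert_of_notMem hvt]; push_cast; ring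

lemma caroWeiSum_univ [Fintype V] :
    G.caroWeiSum univ = ∑ v, (1 : ℝ) / (1 + G.degree v) := by
  simp only [caroWeiSum, ← card_neighborFinset_eq_degree, neighborFinset_eq_filter]

end SimpleGraph

lemma card_le_indepNum {n : ℕ} {G : SimpleGraph (Fin n)} {t : Finset (Fin n)}
    (ht : G.IsIndepSet t) : #t ≤ indepNum G :=
  le_sup (f := card) <| mem_filter.2
    ⟨mem_powerset.2 (subset_univ t), fun _ hu _ hv huv => ht hu hv (G.ne_of_adj huv) huv⟩

/-- Caro–Wei: α(G) ≥ ∑_{v} 1/(1 + d(v)). -/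
theorem stmt10 {n : ℕ} (G : SimpleGraph (Fin n)) :
    (∑ v, (1 : ℝ) / (1 + (G.degree v : ℝ))) ≤ (indepNum G : ℝ) := by
  obtain ⟨t, -, ht, hsum⟩ := G.exists_isIndepSet_subset_caroWeiSum_le univ
  calc (∑ v, (1 : ℝ) / (1 + (G.degree v : ℝ))) = G.caroWeiSum univ := G.caroWeiSum_univ.symm
    _ ≤ #t := hsum
    _ ≤ indepNum G := by exact_mod_cast card_le_indepNum ht
end
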